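/- arXiv:2003.11298 — 2 statements merged into one kernel-verified Lean document; each statement's English description precedes it below -/
import Mathlib

section
/- Let γ_1,…,γ_n be the edge vectors along the boundary of a convex polygon in ℝ² with n vertices, taken in cyclic order. Then σ(γ_1,…,γ_n,ε) = 1 with respect to the preferred orientation ε of the sequence. If moreover n is even, then the sequence (γ_1,−γ_2,γ_3,…,γ_{n−1},−γ_n) is locally convex with preferred orientation −ε, and σ(γ_1,−γ_2,…,γ_{n−1},−γ_n,−ε) = (n−2)/2. -/
open Classical

namespace GKMPaper

/-- `ℤ^m`, the weight lattice. -/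
abbrev Zm (m : ℕ) := Fin m → ℤ

/-- The relation identifying a vector with its negative. -/
def pmRel (m : ℕ) (a b : Zm m) : Prop := a = b ∨ a = -b

theorem pmRel_equiv (m : ℕ) : Equivalence (pmRel m) := by
  constructor
  · intro a; exact Or.inl rfl
  · intro a b hab
    rcases hab with hh | hh
    · exact Or.inl hh.symm
    · exact Or.inr (by rw [hh, neg_neg])
  · intro a b c h1 h2
    rcases h1 with h1 | h1 <;> rcases h2 with h2 | h2
    · exact Or.inl (h1.trans h2)
    · exact Or.inr (h1.trans h2)
    · exact Or.inr (by rw [h1, h2])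
    · exact Or.inl (by rw [h1, h2, neg_neg])

def pmSetoid (m : ℕ) : Setoid (Zm m) := ⟨pmRel m, pmRel_equiv m⟩

/-- `ℤ^m / ±1`. -/
def ZmPM (m : ℕ) := Quotient (pmSetoid m)

/-- The projection `ℤ^m → ℤ^m/±1`. -/
def pm {m : ℕ} (a : Zm m) : ZmPM m := Quotient.mk (pmSetoid m) a

/-- Linear independence over `ℤ`. -/
def Indep {m : ℕ} (a b : Zm m) : Prop :=
  ∀ c d : ℤ, c • a + d • b = 0 → c = 0 ∧ d = 0

/-- An abstract graph with finite vertex and edge sets, each edge occurring with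
both orientations, and no loops. -/
structure OrGraph : Type 1 where
  V : Type
  E : Type
  fV : Fintype V
  fE : Fintype E
  dV : DecidableEq V
  dE : DecidableEq E
  src : E → V
  dst : E → V
  rev : E → E
  rev_rev : ∀ e, rev (rev e) = e
  rev_ne : ∀ e, rev e ≠ e
  src_rev : ∀ e, src (rev e) = dst e
  no_loop : ∀ e, src e ≠ dst e

attribute [instance] OrGraph.fV OrGraph.fE OrGraph.dV OrGraph.dE

/-- A connection on a graph. -/
structure Connection (G : OrGraph) where
  t : G.E → G.E → G.E
  src_t : ∀ e f, G.src f = G.src e → G.src (t e f) = G.dst e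
  t_self : ∀ e, t e e = G.rev e
  t_inv : ∀ e f, G.src f = G.src e → t (G.rev e) (t e f) = f

/-- `k`-valence. -/
def OrGraph.Regular (G : OrGraph) (k : ℕ) : Prop :=
  ∀ v : G.V, Fintype.card {e : G.E // G.src e = v} = k

def OrGraph.Adj (G : OrGraph) (v w : G.V) : Prop :=
  ∃ e, G.src e = v ∧ G.dst e = w

def OrGraph.IsConn (G : OrGraph) : Prop :=
  ∀ v w : G.V, Relation.ReflTransGen G.Adj v w

/-- Compatibility of a connection with an unsigned axial function. -/
def UnsignedCompat {m : ℕ} (G : OrGraph) (α : G.E → ZmPM m) (C : Connection G) : Prop :=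
  (∀ e f : G.E, G.src f = G.src e → e ≠ f →
      ∀ a b : Zm m, pm a = α e → pm b = α f → Indep a b) ∧
  (∀ e f : G.E, G.src f = G.src e →
      ∃ (a g : Zm m) (c : ℤ), pm a = α f ∧ pm g = α e ∧ α (C.t e f) = pm (a + c • g)) ∧
  (∀ e : G.E, α (G.rev e) = α e)

/-- `(G, α)` is an (unsigned) abstract GKM graph of valence `k` with labels in `ℤ^m/±1`. -/
def IsGKM {m : ℕ} (G : OrGraph) (k : ℕ) (α : G.E → ZmPM m) : Prop :=
  G.Regular k ∧ G.IsConn ∧ ∃ C : Connection G, UnsignedCompat G α C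

/-- Compatibility of a connection with a signed axial function. -/
def SignedCompat {m : ℕ} (G : OrGraph) (α : G.E → Zm m) (C : Connection G) : Prop :=
  (∀ e f : G.E, G.src f = G.src e → e ≠ f → Indep (α e) (α f)) ∧
  (∀ e f : G.E, G.src f = G.src e → ∃ c : ℤ, α (C.t e f) = α f + c • α e) ∧
  (∀ e : G.E, α (G.rev e) = - α e)

/-- `(G, α)` is a signed abstract GKM graph of valence `k` with labels in `ℤ^m`. -/
def IsSignedGKM {m : ℕ} (G : OrGraph) (k : ℕ) (α : G.E → Zm m) : Prop :=
  G.Regular k ∧ G.IsConn ∧ ∃ C : Connection G, SignedCompat G α C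

/-- Effectivity of an unsigned GKM graph: at every vertex, the labels of the
outgoing edges lift to a generating set of `ℤ^m`. -/
def Effective {m : ℕ} (G : OrGraph) (α : G.E → ZmPM m) : Prop :=
  ∀ v : G.V, ∃ lift : {e : G.E // G.src e = v} → Zm m,
    (∀ e, pm (lift e) = α e.1) ∧ Submodule.span ℤ (Set.range lift) = ⊤

def SignedEffective {m : ℕ} (G : OrGraph) (α : G.E → Zm m) : Prop :=
  ∀ v : G.V,
    Submodule.span ℤ (Set.range (fun e : {e : G.E // G.src e = v} => α e.1)) = ⊤

/-- A graph fibration: a morphism sending vertices to vertices and horizontal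
edges to edges, bijectively from the horizontal edges at `p` to the edges at `π(p)`. -/
structure GraphFib (G B : OrGraph) where
  onV : G.V → B.V
  onE : G.E → B.E
  src_onE : ∀ e, onV (G.src e) ≠ onV (G.dst e) → B.src (onE e) = onV (G.src e)
  dst_onE : ∀ e, onV (G.src e) ≠ onV (G.dst e) → B.dst (onE e) = onV (G.dst e)
  rev_onE : ∀ e, onV (G.src e) ≠ onV (G.dst e) → onE (G.rev e) = B.rev (onE e)

def GraphFib.Vertical {G B : OrGraph} (π : GraphFib G B) (e : G.E) : Prop :=
  π.onV (G.src e) = π.onV (G.dst e)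

def GraphFib.IsFib {G B : OrGraph} (π : GraphFib G B) : Prop :=
  ∀ p : G.V, Function.Bijective
    (fun e : {e : G.E // G.src e = p ∧ ¬ π.Vertical e} =>
      (⟨π.onE e.1, by rw [π.src_onE e.1 e.2.2, e.2.1]⟩ : {f : B.E // B.src f = π.onV p}))

/-- The extra conditions for a (unsigned) GKM fibration, w.r.t. connections `C`, `CB`. -/
def GKMFibCompat {m : ℕ} {G B : OrGraph} (αΓ : G.E → ZmPM m) (αB : B.E → ZmPM m)
    (π : GraphFib G B) (C : Connection G) (CB : Connection B) : Prop :=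
  (∀ e, ¬ π.Vertical e → αΓ e = αB (π.onE e)) ∧
  (∀ e f, G.src f = G.src e → π.Vertical f → π.Vertical (C.t e f)) ∧
  (∀ e f, G.src f = G.src e → ¬ π.Vertical e → ¬ π.Vertical f →
      ¬ π.Vertical (C.t e f) ∧ π.onE (C.t e f) = CB.t (π.onE e) (π.onE f))

/-- `π` is a GKM fibration of unsigned GKM graphs. -/
def IsGKMFib {m : ℕ} {G B : OrGraph} (αΓ : G.E → ZmPM m) (αB : B.E → ZmPM m)
    (π : GraphFib G B) : Prop :=
  π.IsFib ∧ ∃ (C : Connection G) (CB : Connection B),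
    UnsignedCompat G αΓ C ∧ UnsignedCompat B αB CB ∧ GKMFibCompat αΓ αB π C CB

def SignedGKMFibCompat {m : ℕ} {G B : OrGraph} (sΓ : G.E → Zm m) (sB : B.E → Zm m)
    (π : GraphFib G B) (C : Connection G) (CB : Connection B) : Prop :=
  (∀ e, ¬ π.Vertical e → sΓ e = sB (π.onE e)) ∧
  (∀ e f, G.src f = G.src e → π.Vertical f → π.Vertical (C.t e f)) ∧
  (∀ e f, G.src f = G.src e → ¬ π.Vertical e → ¬ π.Vertical f →
      ¬ π.Vertical (C.t e f) ∧ π.onE (C.t e f) = CB.t (π.onE e) (π.onE f))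

/-- `π` is a signed GKM fibration of signed GKM graphs. -/
def IsSignedGKMFib {m : ℕ} {G B : OrGraph} (sΓ : G.E → Zm m) (sB : B.E → Zm m)
    (π : GraphFib G B) : Prop :=
  π.IsFib ∧ ∃ (C : Connection G) (CB : Connection B),
    SignedCompat G sΓ C ∧ SignedCompat B sB CB ∧ SignedGKMFibCompat sΓ sB π C CB

/-- `(π, ft)` is a fiberwise signed fibration: `ft` is a lift of `αΓ` on the
vertical edges, satisfying the congruence condition w.r.t. suitable connections. -/
def IsFiberwiseSigned {m : ℕ} {G B : OrGraph} (αΓ : G.E → ZmPM m) (αB : B.E → ZmPM m)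
    (π : GraphFib G B) (ft : G.E → Zm m) : Prop :=
  π.IsFib ∧
  (∀ e, π.Vertical e → pm (ft e) = αΓ e) ∧
  (∀ e, π.Vertical e → ft (G.rev e) = - ft e) ∧
  ∃ (C : Connection G) (CB : Connection B),
    UnsignedCompat G αΓ C ∧ UnsignedCompat B αB CB ∧ GKMFibCompat αΓ αB π C CB ∧
    ∀ e f, G.src f = G.src e → π.Vertical f →
      ∃ (g : Zm m) (c : ℤ), pm g = αΓ e ∧ ft (C.t e f) = ft f + c • g

/-- Isomorphism of unsigned GKM graphs. -/
structure GKMIso {m : ℕ} (G : OrGraph) (α : G.E → ZmPM m)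
    (G' : OrGraph) (α' : G'.E → ZmPM m) : Type where
  fV : G.V ≃ G'.V
  fE : G.E ≃ G'.E
  φ : Zm m ≃ₗ[ℤ] Zm m
  src_comm : ∀ e, G'.src (fE e) = fV (G.src e)
  dst_comm : ∀ e, G'.dst (fE e) = fV (G.dst e)
  rev_comm : ∀ e, fE (G.rev e) = G'.rev (fE e)
  lab : ∀ (e : G.E) (a : Zm m), pm a = α e → α' (fE e) = pm (φ a)

/-- Isomorphism of signed GKM graphs. -/
structure SignedGKMIso {m : ℕ} (G : OrGraph) (α : G.E → Zm m)
    (G' : OrGraph) (α' : G'.E → Zm m) : Type where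
  fV : G.V ≃ G'.V
  fE : G.E ≃ G'.E
  φ : Zm m ≃ₗ[ℤ] Zm m
  src_comm : ∀ e, G'.src (fE e) = fV (G.src e)
  dst_comm : ∀ e, G'.dst (fE e) = fV (G.dst e)
  rev_comm : ∀ e, fE (G.rev e) = G'.rev (fE e)
  lab : ∀ e, α' (fE e) = φ (α e)

/-- Equivalence of fiberwise signed fibrations over the same base (identity on `ℤ^m`). -/
structure FSFEquiv {m : ℕ} {G B G' : OrGraph}
    (αΓ : G.E → ZmPM m) (π : GraphFib G B) (ft : G.E → Zm m)
    (αΓ' : G'.E → ZmPM m) (π' : GraphFib G' B) (ft' : G'.E → Zm m) : Type where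
  fV : G.V ≃ G'.V
  fE : G.E ≃ G'.E
  src_comm : ∀ e, G'.src (fE e) = fV (G.src e)
  dst_comm : ∀ e, G'.dst (fE e) = fV (G.dst e)
  rev_comm : ∀ e, fE (G.rev e) = G'.rev (fE e)
  lab : ∀ e, αΓ' (fE e) = αΓ e
  baseV : ∀ p, π'.onV (fV p) = π.onV p
  baseE : ∀ e, ¬ π.Vertical e → π'.onE (fE e) = π.onE e
  fiblab : ∀ e, π.Vertical e → ft' (fE e) = ft e

/-- Equivalence of signed GKM fibrations over the same base (identity on `ℤ^m`). -/
structure SFEquiv {m : ℕ} {G B G' : OrGraph}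
    (sΓ : G.E → Zm m) (π : GraphFib G B)
    (sΓ' : G'.E → Zm m) (π' : GraphFib G' B) : Type where
  fV : G.V ≃ G'.V
  fE : G.E ≃ G'.E
  src_comm : ∀ e, G'.src (fE e) = fV (G.src e)
  dst_comm : ∀ e, G'.dst (fE e) = fV (G.dst e)
  rev_comm : ∀ e, fE (G.rev e) = G'.rev (fE e)
  lab : ∀ e, sΓ' (fE e) = sΓ e
  baseV : ∀ p, π'.onV (fV p) = π.onV p
  baseE : ∀ e, ¬ π.Vertical e → π'.onE (fE e) = π.onE e

/-- Realizing `ℤ²` inside `ℝ² = ℂ`. -/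
noncomputable def toC (a : Zm 2) : ℂ := (a 0 : ℝ) + (a 1 : ℝ) * Complex.I

def cross (a b : ℂ) : ℝ := a.re * b.im - a.im * b.re

/-- A vertex of a signed GKM graph with labels in `ℤ²` is interior if the cone
spanned by the labels of the edges emanating from it is all of `ℝ²`. -/
def InteriorVtx (G : OrGraph) (α : G.E → Zm 2) (p : G.V) : Prop :=
  ∀ x : ℂ, ∃ c : G.E → ℝ, (∀ e, 0 ≤ c e) ∧
    x = ∑ e ∈ Finset.univ.filter (fun e : G.E => G.src e = p), c e • toC (α e)

/-- The angle from `w` to `w'`, represented in `[0, 2π)` if `ε = true`,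
and in `(-2π, 0]` if `ε = false`. -/
noncomputable def angTo (ε : Bool) (w w' : ℂ) : ℝ :=
  if ε then (if (w' / w).arg < 0 then (w' / w).arg + 2 * Real.pi else (w' / w).arg)
  else (if 0 < (w' / w).arg then (w' / w).arg - 2 * Real.pi else (w' / w).arg)

/-- The winding number of a cyclic sequence of vectors w.r.t. the orientation `ε`. -/
noncomputable def winding {nn : ℕ} [NeZero nn] (w : ZMod nn → ℂ) (ε : Bool) : ℝ :=
  (1 / (2 * Real.pi)) * ∑ i : ZMod nn, |angTo ε (w i) (w (i + 1))|

def LocallyConvex {nn : ℕ} (w : ZMod nn → ℂ) : Prop :=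
  (∀ i, angTo true (w i) (w (i + 1)) ∈ Set.Ioo 0 Real.pi) ∨
  (∀ i, angTo false (w i) (w (i + 1)) ∈ Set.Ioo (-Real.pi) 0)

/-- `ε` is the preferred orientation of the locally convex sequence `w`. -/
def Preferred {nn : ℕ} (w : ZMod nn → ℂ) (ε : Bool) : Prop :=
  (ε = true ∧ ∀ i, angTo true (w i) (w (i + 1)) ∈ Set.Ioo 0 Real.pi) ∨
  (ε = false ∧ ∀ i, angTo false (w i) (w (i + 1)) ∈ Set.Ioo (-Real.pi) 0)

/-- `P` lists the vertices of a strictly convex polygon in cyclic order. -/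
def ConvexCyclic {nn : ℕ} (P : ZMod nn → ℂ) : Prop :=
  (∀ i j, j ≠ i → j ≠ i + 1 → 0 < cross (P (i + 1) - P i) (P j - P i)) ∨
  (∀ i j, j ≠ i → j ≠ i + 1 → cross (P (i + 1) - P i) (P j - P i) < 0)

def SubAdj (G : OrGraph) (S : Set G.E) (v w : G.V) : Prop :=
  ∃ e ∈ S, G.src e = v ∧ G.dst e = w

/-- `S` is (the edge set of) a connected `2`-valent signed GKM subgraph of `(G, α)`. -/
def IsSigned2ValentSub (G : OrGraph) (α : G.E → Zm 2) (S : Set G.E) : Prop :=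
  S.Nonempty ∧
  (∀ e ∈ S, G.rev e ∈ S) ∧
  (∀ v : G.V, (∃ e ∈ S, G.src e = v) → Nat.card {e : G.E // e ∈ S ∧ G.src e = v} = 2) ∧
  (∀ v w : G.V, (∃ e ∈ S, G.src e = v) → (∃ e ∈ S, G.src e = w) →
      Relation.ReflTransGen (SubAdj G S) v w) ∧
  ∃ T : G.E → G.E → G.E,
    (∀ e f, e ∈ S → f ∈ S → G.src f = G.src e → T e f ∈ S ∧ G.src (T e f) = G.dst e) ∧
    (∀ e, e ∈ S → T e e = G.rev e) ∧
    (∀ e f, e ∈ S → f ∈ S → G.src f = G.src e → T (G.rev e) (T e f) = f) ∧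
    (∀ e f, e ∈ S → f ∈ S → G.src f = G.src e → ∃ c : ℤ, α (T e f) = α f + c • α e)

/-- A `2`-valent signed GKM subgraph of polytope type: it is a cycle realized by the
boundary edges of a simple convex `2`-polytope, with labels representing the slopes. -/
def IsPolytopeTypeSub (G : OrGraph) (α : G.E → Zm 2) (S : Set G.E) : Prop :=
  IsSigned2ValentSub G α S ∧
  ∃ np : ℕ, 3 ≤ np ∧
    ∃ (cyc : ZMod np → G.E) (P : ZMod np → ℂ) (t : ZMod np → ℝ),
      (∀ i, cyc i ∈ S) ∧
      (∀ ed ∈ S, ∃ i, ed = cyc i ∨ ed = G.rev (cyc i)) ∧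
      (∀ i, G.dst (cyc i) = G.src (cyc (i + 1))) ∧
      ConvexCyclic P ∧
      (∀ i, 0 < t i) ∧
      (∀ i, P (i + 1) - P i = t i • toC (α (cyc i)))

/-- A fibration over an `n`-gon base is of product type if the lifts of a path
once around the base are closed. -/
def ProductType {G B : OrGraph} (π : GraphFib G B) {nn : ℕ} (eB : ZMod nn → B.E) : Prop :=
  ∃ l : ZMod nn → G.E,
    ∀ i, ¬ π.Vertical (l i) ∧ π.onE (l i) = eB i ∧ G.dst (l i) = G.src (l (i + 1))

/-- `ℤ`-indexed `n`-gon data for a `2`-valent base graph. -/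
structure ZGonData (B : OrGraph) (n : ℕ) where
  v : ℤ → B.V
  eB : ℤ → B.E
  v_per : ∀ i, v (i + n) = v i
  e_per : ∀ i, eB (i + n) = eB i
  src_e : ∀ i, B.src (eB i) = v i
  dst_e : ∀ i, B.dst (eB i) = v (i + 1)
  v_inj : ∀ i j : ℤ, 0 ≤ i → i < n → 0 ≤ j → j < n → v i = v j → i = j
  v_surj : ∀ w : B.V, ∃ i : ℤ, v i = w
  e_cover : ∀ ed : B.E, ∃ i : ℤ, ed = eB i ∨ ed = B.rev (eB i)

/-- A choice of sign representatives `γ_i` of the base labels with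
`γ_i ≡ -γ_{i+2} (mod γ_{i+1})` for all `i ∈ ℤ`. -/
structure GammaData {B : OrGraph} {n : ℕ} (αB : B.E → ZmPM 2) (D : ZGonData B n) where
  γ : ℤ → Zm 2
  lift : ∀ i, pm (γ i) = αB (D.eB i)
  cong : ∀ i, ∃ c : ℤ, γ i + γ (i + 2) = c • γ (i + 1)

/-- A fiberwise signed `3`-valent GKM fibration over `(B, αB)`. -/
structure FSFOver (B : OrGraph) (αB : B.E → ZmPM 2) : Type 1 where
  G : OrGraph
  αΓ : G.E → ZmPM 2
  hΓ : IsGKM G 3 αΓ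
  π : GraphFib G B
  ft : G.E → Zm 2
  isfs : IsFiberwiseSigned αΓ αB π ft

def FSFOver.Equiv {B : OrGraph} {αB : B.E → ZmPM 2} (F F' : FSFOver B αB) : Prop :=
  Nonempty (FSFEquiv F.αΓ F.π F.ft F'.αΓ F'.π F'.ft)

/-- A signed `3`-valent GKM fibration over the signed graph `(B, sB)`. -/
structure SFOver (B : OrGraph) (sB : B.E → Zm 2) : Type 1 where
  G : OrGraph
  sΓ : G.E → Zm 2
  hΓ : IsSignedGKM G 3 sΓ
  π : GraphFib G B
  issf : IsSignedGKMFib sΓ sB π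

def SFOver.Equiv {B : OrGraph} {sB : B.E → Zm 2} (F F' : SFOver B sB) : Prop :=
  Nonempty (SFEquiv F.sΓ F.π F'.sΓ F'.π)

/-- The fibration `F` realizes the classification datum `([k], η)` w.r.t. the fixed data. -/
def RealizesFS {B : OrGraph} {αB : B.E → ZmPM 2} {n : ℕ} (D : ZGonData B n)
    (Γd : GammaData αB D) (F : FSFOver B αB) (k : ZMod n → ℤ) (η : Bool) : Prop :=
  (η = false ↔ ProductType F.π (fun i : ZMod n => D.eB i.val)) ∧
  ∃ (gE : ℤ → F.G.E) (αf : ℤ → Zm 2) (kk : ℤ → ℤ),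
    (∀ i, F.π.Vertical (gE i)) ∧
    (∀ i, F.π.onV (F.G.src (gE i)) = D.v i) ∧
    (∀ i, gE (i + n) = gE i ∨ gE (i + n) = F.G.rev (gE i)) ∧
    (∀ i, pm (αf i) = F.αΓ (gE i)) ∧
    (∀ i, ∃ c : ℤ, αf (i + 1) = αf i + c • Γd.γ i) ∧
    (∀ i, αf i = kk i • Γd.γ (i - 1) - kk (i - 1) • Γd.γ i) ∧
    (∀ i, kk i ≠ 0) ∧
    (∀ i : ZMod n, k i = kk i.val)

/-- The signed fibration `F` realizes the classification datum `([k], η)`. -/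
def RealizesS {B : OrGraph} (sB : B.E → Zm 2) {αB : B.E → ZmPM 2} {n : ℕ}
    (D : ZGonData B n) (Γd : GammaData αB D) (F : SFOver B sB)
    (k : ZMod n → ℤ) (η : Bool) : Prop :=
  (η = false ↔ ProductType F.π (fun i : ZMod n => D.eB i.val)) ∧
  ∃ (gE : ℤ → F.G.E) (αf : ℤ → Zm 2) (kk : ℤ → ℤ),
    (∀ i, F.π.Vertical (gE i)) ∧
    (∀ i, F.π.onV (F.G.src (gE i)) = D.v i) ∧
    (∀ i, gE (i + n) = gE i ∨ gE (i + n) = F.G.rev (gE i)) ∧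
    (∀ i, pm (αf i) = pm (F.sΓ (gE i))) ∧
    (∀ i, ∃ c : ℤ, αf (i + 1) = αf i + c • Γd.γ i) ∧
    (∀ i, αf i = kk i • Γd.γ (i - 1) - kk (i - 1) • Γd.γ i) ∧
    (∀ i, kk i ≠ 0) ∧
    (∀ i : ZMod n, k i = kk i.val)

def KRel (n : ℕ) (a b : {k : ZMod n → ℤ // ∀ i, k i ≠ 0}) : Prop :=
  a.1 = b.1 ∨ a.1 = - b.1

/-- `((ℤ∖{0})^n)/±1`. -/
def KClass (n : ℕ) := Quot (KRel n)

/-- The Section 7 setting: a signed GKM fibration of twisted type of a `3`-valent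
signed GKM graph `Γ` over `B`, the boundary of a 2-dimensional Delzant polytope with
`n` vertices, with `Γ` having `n-1` interior vertices; with the basic edges `f i`, `h i`
over `e i` and the fiber edges `g i`. -/
structure Section7 : Type 1 where
  n : ℕ
  hn : 3 ≤ n
  G : OrGraph
  B : OrGraph
  aG : G.E → Zm 2
  aB : B.E → Zm 2
  hG : IsSignedGKM G 3 aG
  hB : IsSignedGKM B 2 aB
  π : GraphFib G B
  hfib : IsSignedGKMFib aG aB π
  v : ZMod n → B.V
  e : ZMod n → B.E
  v_bij : Function.Bijective v
  src_e : ∀ i, B.src (e i) = v i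
  dst_e : ∀ i, B.dst (e i) = v (i + 1)
  e_cover : ∀ ed : B.E, ∃ i, ed = e i ∨ ed = B.rev (e i)
  P : ZMod n → ℂ
  tl : ZMod n → ℝ
  tl_pos : ∀ i, 0 < tl i
  polygon : ConvexCyclic P
  slope : ∀ i, P (i + 1) - P i = tl i • toC (aB (e i))
  delzant : ∀ i, (aB (e (i - 1)) 0) * (aB (e i) 1) - (aB (e (i - 1)) 1) * (aB (e i) 0) = 1 ∨
                 (aB (e (i - 1)) 0) * (aB (e i) 1) - (aB (e (i - 1)) 1) * (aB (e i) 0) = -1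
  f : ZMod n → G.E
  h : ZMod n → G.E
  g : ZMod n → G.E
  f_horiz : ∀ i, ¬ π.Vertical (f i)
  h_horiz : ∀ i, ¬ π.Vertical (h i)
  f_over : ∀ i, π.onE (f i) = e i
  h_over : ∀ i, π.onE (h i) = e i
  f_ne_h : ∀ i, f i ≠ h i
  g_vert : ∀ i, π.Vertical (g i)
  g_src : ∀ i, G.src (g i) = G.src (f i)
  g_dst : ∀ i, G.dst (g i) = G.src (h i)
  chain_f : ∀ i : ZMod n, i + 1 ≠ 0 → G.dst (f i) = G.src (f (i + 1))
  chain_h : ∀ i : ZMod n, i + 1 ≠ 0 → G.dst (h i) = G.src (h (i + 1))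
  twist_f : G.dst (f (-1)) = G.src (h 0)
  twist_h : G.dst (h (-1)) = G.src (f 0)
  k : ZMod n → ℤ
  k_ne : ∀ i, k i ≠ 0
  fiberweight : ∀ i, aG (g i) =
    k i • aB (e (i - 1)) - (if i = 0 then - k (i - 1) else k (i - 1)) • aB (e i)
  interior_count : Nat.card {p : G.V // InteriorVtx G aG p} = n - 1

/-- The type II signed structure: the signs of the labels of every second pair
of basic edges are reversed. -/
noncomputable def Section7.alphaII (S : Section7) : S.G.E → Zm 2 :=
  fun ed =>
    if ∃ i : ZMod S.n, Odd i.val ∧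
        (ed = S.f i ∨ ed = S.h i ∨ ed = S.G.rev (S.f i) ∨ ed = S.G.rev (S.h i))
    then - S.aG ed else S.aG ed


/-!
Every turning angle `δᵢ` from `γᵢ` to `γᵢ₊₁` lies in `(0, π)` for a counterclockwise polygon
(the clockwise case is its complex conjugate), and `∑ δᵢ` is a multiple of `2π`. Measure the
direction of `γⱼ` from `γ₀`: convexity forbids it from coming back to `γ₀` before the last edge
(`cross_sub_neg_of_left_turns`, with `p₁` the second vertex), so the partial sums of the `δᵢ`
are exactly these directions and the total is `2π`. For even `n`, negating every second edge
replaces each `δᵢ` by `δᵢ - π`, whose absolute values sum to `nπ - 2π`.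
-/

open Real Finset ComplexConjugate

lemma im_div_eq_cross_div_normSq (w w' : ℂ) : (w' / w).im = cross w w' / Complex.normSq w := by
  rw [Complex.div_im, cross]
  ring

lemma im_div_pos_iff (w w' : ℂ) : 0 < (w' / w).im ↔ 0 < cross w w' := by
  rcases eq_or_ne w 0 with rfl | hw
  · simp [cross]
  · rw [im_div_eq_cross_div_normSq, div_pos_iff_of_pos_right (Complex.normSq_pos.2 hw)]

lemma im_div_neg_iff (w w' : ℂ) : (w' / w).im < 0 ↔ cross w w' < 0 := by
  rcases eq_or_ne w 0 with rfl | hw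
  · simp [cross]
  · rw [im_div_eq_cross_div_normSq, div_lt_iff₀ (Complex.normSq_pos.2 hw), zero_mul]

lemma Complex.arg_mem_Ioo_zero_pi_iff (z : ℂ) : z.arg ∈ Set.Ioo 0 π ↔ 0 < z.im := by
  refine ⟨fun ⟨h₀, hπ⟩ => lt_of_le_of_ne (Complex.arg_nonneg_iff.1 h₀.le) fun him => ?_,
    fun h => ⟨lt_of_le_of_ne (Complex.arg_nonneg_iff.2 h.le) fun harg => ?_,
      lt_of_le_of_ne (Complex.arg_le_pi z) fun harg => ?_⟩⟩
  · rcases le_or_gt 0 z.re with hre | hre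
    · exact h₀.ne' (Complex.arg_eq_zero_iff.2 ⟨hre, him.symm⟩)
    · exact hπ.ne (Complex.arg_eq_pi_iff.2 ⟨hre, him.symm⟩)
  · exact h.ne' (Complex.arg_eq_zero_iff.1 harg.symm).2
  · exact h.ne' (Complex.arg_eq_pi_iff.1 harg).2

lemma angTo_true_eq_toIcoMod (w w' : ℂ) :
    angTo true w w' = toIcoMod two_pi_pos 0 (w' / w).arg := by
  have h₁ := Complex.neg_pi_lt_arg (w' / w)
  have h₂ := Complex.arg_le_pi (w' / w)
  have hπ := pi_pos
  symm
  rw [toIcoMod_eq_iff]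
  simp only [angTo, if_true, zero_add]
  split_ifs
  · exact ⟨⟨by linarith, by linarith⟩, -1, by simp⟩
  · exact ⟨⟨by linarith, by linarith⟩, 0, by simp⟩

lemma angTo_true_mem_Ico (w w' : ℂ) : angTo true w w' ∈ Set.Ico 0 (2 * π) := by
  simpa [angTo_true_eq_toIcoMod] using toIcoMod_mem_Ico two_pi_pos 0 (w' / w).arg

lemma angTo_self (ε : Bool) (w : ℂ) : angTo ε w w = 0 := by
  rcases eq_or_ne w 0 with rfl | hw
  · cases ε <;> simp [angTo]
  · cases ε <;> simp [angTo, div_self hw]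

lemma angTo_true_trans {u a b : ℂ} (hu : u ≠ 0) (ha : a ≠ 0) (hb : b ≠ 0) :
    angTo true u b = toIcoMod two_pi_pos 0 (angTo true u a + angTo true a b) := by
  have hmul : b / u = a / u * (b / a) := by field_simp
  obtain ⟨k, hk⟩ := Real.Angle.angle_eq_iff_two_pi_dvd_sub.1
    (Complex.arg_mul_coe_angle (div_ne_zero ha hu) (div_ne_zero hb ha))
  rw [← hmul] at hk
  rw [angTo_true_eq_toIcoMod, angTo_true_eq_toIcoMod, angTo_true_eq_toIcoMod,
    toIcoMod_eq_toIcoMod]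
  refine ⟨-(toIcoDiv two_pi_pos 0 (a / u).arg + toIcoDiv two_pi_pos 0 (b / a).arg + k), ?_⟩
  have h₁ := toIcoMod_sub_self two_pi_pos 0 (a / u).arg
  have h₂ := toIcoMod_sub_self two_pi_pos 0 (b / a).arg
  simp only [zsmul_eq_mul, Int.cast_neg, Int.cast_add] at h₁ h₂ hk ⊢
  linarith

lemma toIcoMod_two_pi_of_mem {x : ℝ} (hx : x ∈ Set.Ico (2 * π) (4 * π)) :
    toIcoMod two_pi_pos 0 x = x - 2 * π := by
  rw [toIcoMod_eq_iff, zero_add]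
  exact ⟨⟨by linarith [hx.1], by linarith [hx.2]⟩, 1, by simp⟩

lemma angTo_true_mem_Ioo_iff (w w' : ℂ) : angTo true w w' ∈ Set.Ioo 0 π ↔ 0 < cross w w' := by
  have hπ := Complex.neg_pi_lt_arg (w' / w)
  rw [← im_div_pos_iff]
  simp only [angTo, if_true]
  split_ifs with h
  · exact iff_of_false (fun h' => by linarith [h'.2])
      fun h' => by linarith [Complex.arg_neg_iff.1 h]
  · exact Complex.arg_mem_Ioo_zero_pi_iff _

lemma angTo_false_mem_Ioo_iff (w w' : ℂ) :
    angTo false w w' ∈ Set.Ioo (-π) 0 ↔ cross w w' < 0 := by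
  have hπ := Complex.arg_le_pi (w' / w)
  rw [← im_div_neg_iff]
  simp only [angTo, Bool.false_eq_true, if_false]
  split_ifs with h
  · exact iff_of_false (fun h' => by linarith [h'.1])
      fun h' => by linarith [Complex.arg_nonneg_iff.1 h.le]
  · exact ⟨fun h' => Complex.arg_neg_iff.1 h'.2,
      fun h' => ⟨Complex.neg_pi_lt_arg _, Complex.arg_neg_iff.2 h'⟩⟩

lemma pi_lt_angTo_true_iff (w w' : ℂ) : π < angTo true w w' ↔ cross w w' < 0 := by
  have h₁ := Complex.neg_pi_lt_arg (w' / w)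
  have h₂ := Complex.arg_le_pi (w' / w)
  rw [← im_div_neg_iff, ← Complex.arg_neg_iff]
  simp only [angTo, if_true]
  split_ifs with h
  · exact iff_of_true (by linarith) h
  · exact iff_of_false (by linarith) h

@[simp]
lemma cross_self (w : ℂ) : cross w w = 0 := by
  simp only [cross]
  ring

lemma ne_zero_of_cross_pos {w w' : ℂ} (h : 0 < cross w w') : w ≠ 0 := by
  rintro rfl
  simp [cross] at h

theorem sum_range_angTo_eq_two_pi {W : ℕ → ℂ} {N : ℕ} (hN : 0 < N)
    (hturn : ∀ m, 0 < cross (W m) (W (m + 1)))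
    (hwrap : ∀ j, j + 1 < N → cross (W 0) (W j) < 0 → cross (W 0) (W (j + 1)) < 0)
    (hper : W N = W 0) :
    ∑ m ∈ range N, angTo true (W m) (W (m + 1)) = 2 * π := by
  have hW m : W m ≠ 0 := ne_zero_of_cross_pos (hturn m)
  have hδ m : angTo true (W m) (W (m + 1)) ∈ Set.Ioo 0 π :=
    (angTo_true_mem_Ioo_iff _ _).2 (hturn m)
  have hπ := pi_pos
  have partial_sum : ∀ j < N,
      angTo true (W 0) (W j) = ∑ m ∈ range j, angTo true (W m) (W (m + 1)) := by
    intro j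
    induction j with
    | zero => simp [angTo_self]
    | succ j ih =>
      intro hj
      have hθ := angTo_true_mem_Ico (W 0) (W j)
      have htrans := angTo_true_trans (hW 0) (hW j) (hW (j + 1))
      rw [sum_range_succ, ← ih (by omega)]
      -- the direction cannot wrap around past `W 0` before the last edge
      have hlt : angTo true (W 0) (W j) + angTo true (W j) (W (j + 1)) < 2 * π := by
        by_contra! hge
        have hnext := (pi_lt_angTo_true_iff _ _).2 <| hwrap j hj <|
          (pi_lt_angTo_true_iff _ _).1 (by linarith [(hδ j).2])
        rw [htrans, toIcoMod_two_pi_of_mem ⟨hge, by linarith [hθ.2, (hδ j).2]⟩] at hnext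
        linarith [hθ.2, (hδ j).2]
      rw [htrans, (toIcoMod_eq_self two_pi_pos).2 ⟨by linarith [hθ.1, (hδ j).1], by linarith⟩]
  obtain ⟨N, rfl⟩ := Nat.exists_eq_add_one_of_ne_zero hN.ne'
  have hθ := angTo_true_mem_Ico (W 0) (W N)
  have hlast := angTo_true_trans (hW 0) (hW N) (hW (N + 1))
  rw [show angTo true (W 0) (W (N + 1)) = 0 by rw [hper, angTo_self]] at hlast
  rw [sum_range_succ, ← partial_sum N (by omega)]
  rcases lt_or_ge (angTo true (W 0) (W N) + angTo true (W N) (W (N + 1))) (2 * π) with h | h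
  · rw [(toIcoMod_eq_self two_pi_pos).2 ⟨by linarith [hθ.1, (hδ N).1], by linarith⟩] at hlast
    linarith [hθ.1, (hδ N).1]
  · rw [toIcoMod_two_pi_of_mem ⟨h, by linarith [hθ.2, (hδ N).2]⟩] at hlast
    linarith

lemma cross_sub_neg_of_left_turns {p₀ p₁ a b c : ℂ}
    (hb : 0 < cross (p₁ - p₀) (b - p₀)) (ha₁ : 0 < cross (b - a) (p₁ - a))
    (hb₁ : 0 < cross (c - b) (p₁ - b)) (hturn : 0 < cross (b - a) (c - b))
    (h : cross (p₁ - p₀) (b - a) < 0) : cross (p₁ - p₀) (c - b) < 0 := by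
  have key : cross (p₁ - p₀) (c - b) * cross (b - a) (p₁ - a) =
      cross (p₁ - p₀) (b - a) * cross (c - b) (p₁ - b) -
        cross (b - a) (c - b) * cross (p₁ - p₀) (b - p₀) := by
    simp only [cross, Complex.sub_re, Complex.sub_im]
    ring
  refine neg_of_mul_neg_left ?_ ha₁.le
  rw [key]
  nlinarith [mul_pos hturn hb, mul_pos (neg_pos.2 h) hb₁]

lemma ZMod.natCast_ne_zero_of_lt {n k : ℕ} (h₀ : 0 < k) (hk : k < n) : (k : ZMod n) ≠ 0 := by
  rw [Ne, ZMod.natCast_eq_zero_iff]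
  exact Nat.not_dvd_of_pos_of_lt h₀ hk

lemma ZMod.sum_eq_sum_range {M : Type*} [AddCommMonoid M] {n : ℕ} [NeZero n]
    (f : ZMod n → M) : ∑ i, f i = ∑ m ∈ range n, f m := by
  obtain ⟨k, rfl⟩ := Nat.exists_eq_add_one_of_ne_zero (NeZero.ne n)
  rw [Finset.sum_range fun m => f m]
  exact Finset.sum_congr rfl fun i _ => congrArg f (ZMod.natCast_zmod_val i).symm

def edges {n : ℕ} (P : ZMod n → ℂ) (i : ZMod n) : ℂ := P (i + 1) - P i

section PositivelyOrientedPolygon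

variable {n : ℕ} {P : ZMod n → ℂ}
  (hP : ∀ i j, j ≠ i → j ≠ i + 1 → 0 < cross (P (i + 1) - P i) (P j - P i))
include hP

lemma cross_edges_succ_pos (hn : 3 ≤ n) (i : ZMod n) :
    0 < cross (edges P i) (edges P (i + 1)) := by
  have h₁ : (1 : ZMod n) ≠ 0 := by exact_mod_cast ZMod.natCast_ne_zero_of_lt one_pos (by omega)
  have h₂ : (2 : ZMod n) ≠ 0 := by exact_mod_cast ZMod.natCast_ne_zero_of_lt two_pos (by omega)
  have h := hP i (i + 1 + 1) (fun h => h₂ (by linear_combination h))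
    (fun h => h₁ (by linear_combination h))
  convert h using 1
  simp only [edges, cross, Complex.sub_re, Complex.sub_im]
  ring

lemma cross_edges_zero_succ_neg (hn : 3 ≤ n) {k : ZMod n} (hk : k + 1 ≠ 0)
    (h : cross (edges P 0) (edges P k) < 0) : cross (edges P 0) (edges P (k + 1)) < 0 := by
  have hk₀ : k ≠ 0 := by
    rintro rfl
    simp at h
  have hk₁ : k ≠ 1 := by
    rintro rfl
    exact (cross_edges_succ_pos hP hn 0).not_gt (by simpa using h)
  have hconv₀ := hP 0 (k + 1) hk fun h => hk₀ (by linear_combination h)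
  have hconvₖ := hP k 1 (Ne.symm hk₁) fun h => hk₀ (by linear_combination -h)
  have hconvₖ₁ := hP (k + 1) 1 (fun h => hk₀ (by linear_combination -h))
    fun h => hk (by linear_combination -h)
  simp only [edges, zero_add] at h hconv₀ ⊢
  exact cross_sub_neg_of_left_turns hconv₀ hconvₖ hconvₖ₁ (cross_edges_succ_pos hP hn k) h

theorem sum_angTo_edges_eq_two_pi [NeZero n] (hn : 3 ≤ n) :
    ∑ i, angTo true (edges P i) (edges P (i + 1)) = 2 * π := by
  rw [ZMod.sum_eq_sum_range]
  have hturn (m : ℕ) : 0 < cross (edges P m) (edges P (m + 1 : ℕ)) := by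
    simpa using cross_edges_succ_pos hP hn m
  have hwrap (j : ℕ) (hj : j + 1 < n) (h : cross (edges P (0 : ℕ)) (edges P j) < 0) :
      cross (edges P (0 : ℕ)) (edges P (j + 1 : ℕ)) < 0 := by
    have hj' : ((j : ZMod n) + 1) ≠ 0 := by
      exact_mod_cast ZMod.natCast_ne_zero_of_lt j.succ_pos hj
    simpa using cross_edges_zero_succ_neg hP hn hj' (by simpa using h)
  simpa using sum_range_angTo_eq_two_pi (W := fun m : ℕ => edges P m) (N := n) (by omega)
    hturn hwrap (by simp)

theorem preferred_edges_true (hn : 3 ≤ n) : Preferred (edges P) true :=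
  .inl ⟨rfl, fun i => (angTo_true_mem_Ioo_iff _ _).2 (cross_edges_succ_pos hP hn i)⟩

theorem winding_edges_true [NeZero n] (hn : 3 ≤ n) : winding (edges P) true = 1 := by
  have hpos i := (angTo_true_mem_Ioo_iff _ _).2 (cross_edges_succ_pos hP hn i)
  simp only [winding, abs_of_pos (hpos _).1, sum_angTo_edges_eq_two_pi hP hn]
  field_simp

end PositivelyOrientedPolygon

lemma cross_conj (a b : ℂ) : cross (conj a) (conj b) = -cross a b := by
  simp only [cross, Complex.conj_re, Complex.conj_im]
  ring

lemma angTo_true_conj (w w' : ℂ) : angTo true (conj w) (conj w') = -angTo false w w' := by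
  have h₁ := Complex.neg_pi_lt_arg (w' / w)
  have h₂ := Complex.arg_le_pi (w' / w)
  simp only [angTo, if_true, Bool.false_eq_true, if_false, ← map_div₀, Complex.arg_conj]
  split_ifs <;> linarith

lemma winding_conj_true {n : ℕ} [NeZero n] (w : ZMod n → ℂ) :
    winding (fun i => conj (w i)) true = winding w false := by
  simp only [winding, angTo_true_conj, abs_neg]

lemma edges_conj {n : ℕ} (P : ZMod n → ℂ) :
    edges (fun i => conj (P i)) = fun i => conj (edges P i) := by
  ext i
  simp [edges]

theorem exists_preferred_winding_edges_eq_one {n : ℕ} [NeZero n] {P : ZMod n → ℂ} (hn : 3 ≤ n)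
    (hconv : ConvexCyclic P) : ∃ ε, Preferred (edges P) ε ∧ winding (edges P) ε = 1 := by
  rcases hconv with hpos | hneg
  · exact ⟨true, preferred_edges_true hpos hn, winding_edges_true hpos hn⟩
  · have hconj : ∀ i j, j ≠ i → j ≠ i + 1 →
        0 < cross (conj (P (i + 1)) - conj (P i)) (conj (P j) - conj (P i)) := by
      intro i j hji hji₁
      rw [← map_sub, ← map_sub, cross_conj]
      exact neg_pos.2 (hneg i j hji hji₁)
    refine ⟨false, .inr ⟨rfl, fun i => (angTo_false_mem_Ioo_iff _ _).2 ?_⟩, ?_⟩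
    · have h := cross_edges_succ_pos (P := fun i => conj (P i)) hconj hn i
      rw [edges_conj, cross_conj] at h
      exact neg_pos.1 h
    · rw [← winding_conj_true, ← edges_conj]
      exact winding_edges_true (P := fun i => conj (P i)) hconj hn

lemma Preferred.eq {n : ℕ} {w : ZMod n → ℂ} {ε ε' : Bool} (h : Preferred w ε)
    (h' : Preferred w ε') : ε = ε' := by
  rcases h with ⟨rfl, h⟩ | ⟨rfl, h⟩ <;> rcases h' with ⟨rfl, h'⟩ | ⟨rfl, h'⟩
  · rfl
  · linarith [(angTo_true_mem_Ioo_iff _ _).1 (h 0), (angTo_false_mem_Ioo_iff _ _).1 (h' 0)]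
  · linarith [(angTo_true_mem_Ioo_iff _ _).1 (h' 0), (angTo_false_mem_Ioo_iff _ _).1 (h 0)]
  · rfl

lemma Preferred.locallyConvex {n : ℕ} {w : ZMod n → ℂ} {ε : Bool} (h : Preferred w ε) :
    LocallyConvex w :=
  h.imp (fun h => h.2) (fun h => h.2)

lemma ZMod.even_val_add_one_iff {n : ℕ} [NeZero n] (hn : Even n) (i : ZMod n) :
    Even (i + 1).val ↔ ¬Even i.val := by
  have h₂ : 2 ∣ n := even_iff_two_dvd.1 hn
  have h₁ : 1 < n := by
    obtain ⟨k, hk⟩ := hn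
    have := NeZero.ne n
    omega
  rw [ZMod.val_add, ZMod.val_one_eq_one_mod, Nat.mod_eq_of_lt h₁, Nat.even_iff,
    Nat.mod_mod_of_dvd _ h₂, ← Nat.even_iff, Nat.even_add_one]

lemma angTo_neg_left (ε : Bool) (w w' : ℂ) : angTo ε (-w) w' = angTo ε w (-w') := by
  simp only [angTo, div_neg, neg_div]

lemma angTo_false_neg_right {w w' : ℂ} (h : 0 < cross w w') :
    angTo false w (-w') = angTo true w w' - π := by
  have him := (im_div_pos_iff w w').2 h
  have harg := (Complex.arg_mem_Ioo_zero_pi_iff _).2 him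
  simp only [angTo, if_true, Bool.false_eq_true, if_false, neg_div,
    Complex.arg_neg_eq_arg_sub_pi_of_im_pos him]
  rw [if_neg (by linarith [harg.2]), if_neg (by linarith [harg.1])]

lemma angTo_true_neg_right {w w' : ℂ} (h : cross w w' < 0) :
    angTo true w (-w') = angTo false w w' + π := by
  have him := (im_div_neg_iff w w').2 h
  have harg := Complex.arg_neg_iff.2 him
  have hπ := Complex.neg_pi_lt_arg (w' / w)
  simp only [angTo, if_true, Bool.false_eq_true, if_false, neg_div,
    Complex.arg_neg_eq_arg_add_pi_of_im_neg him]
  rw [if_neg (by linarith), if_neg (by linarith)]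

def alternate {n : ℕ} (w : ZMod n → ℂ) (i : ZMod n) : ℂ := if Even i.val then w i else -w i

lemma angTo_alternate {n : ℕ} [NeZero n] (hn : Even n) (ε : Bool) (w : ZMod n → ℂ)
    (i : ZMod n) :
    angTo ε (alternate w i) (alternate w (i + 1)) = angTo ε (w i) (-w (i + 1)) := by
  simp only [alternate, ZMod.even_val_add_one_iff hn]
  split_ifs
  · rfl
  · rw [angTo_neg_left]

theorem locallyConvex_preferred_winding_alternate {n : ℕ} [NeZero n] (hn : Even n)
    {w : ZMod n → ℂ} {ε : Bool} (hw : Preferred w ε) (hwind : winding w ε = 1) :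
    LocallyConvex (alternate w) ∧ Preferred (alternate w) (!ε) ∧
      winding (alternate w) (!ε) = ((n : ℝ) - 2) / 2 := by
  obtain ⟨hpref, habs⟩ : Preferred (alternate w) (!ε) ∧ ∀ i,
      |angTo (!ε) (alternate w i) (alternate w (i + 1))| = π - |angTo ε (w i) (w (i + 1))| := by
    rcases hw with ⟨rfl, hw⟩ | ⟨rfl, hw⟩
    · have key i : angTo false (alternate w i) (alternate w (i + 1)) =
          angTo true (w i) (w (i + 1)) - π := by
        rw [angTo_alternate hn, angTo_false_neg_right ((angTo_true_mem_Ioo_iff _ _).1 (hw i))]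
      refine ⟨.inr ⟨rfl, fun i => ?_⟩, fun i => ?_⟩ <;> have := hw i
      · rw [key]
        exact ⟨by linarith [this.1], by linarith [this.2]⟩
      · rw [Bool.not_true, key, abs_of_neg (by linarith [this.2]), abs_of_pos this.1]
        ring
    · have key i : angTo true (alternate w i) (alternate w (i + 1)) =
          angTo false (w i) (w (i + 1)) + π := by
        rw [angTo_alternate hn, angTo_true_neg_right ((angTo_false_mem_Ioo_iff _ _).1 (hw i))]
      refine ⟨.inl ⟨rfl, fun i => ?_⟩, fun i => ?_⟩ <;> have := hw i
      · rw [key]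
        exact ⟨by linarith [this.1], by linarith [this.2]⟩
      · rw [Bool.not_false, key, abs_of_pos (by linarith [this.1]), abs_of_neg this.2]
        ring
  have hsum : ∑ i, |angTo ε (w i) (w (i + 1))| = 2 * π := by
    rw [winding] at hwind
    field_simp at hwind
    linarith
  refine ⟨hpref.locallyConvex, hpref, ?_⟩
  rw [winding, Finset.sum_congr rfl fun i _ => habs i, sum_sub_distrib, hsum, sum_const,
    card_univ, ZMod.card, nsmul_eq_mul]
  field_simp

/-- the edge vectors along the boundary of a convex polygon with `n`
vertices have winding number `1` w.r.t. the preferred orientation; if `n` is even,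
the alternating sequence `(γ_1, -γ_2, …, γ_{n-1}, -γ_n)` is locally convex with the
opposite preferred orientation and has winding number `(n-2)/2`. -/
theorem statement14 (nn : ℕ) [NeZero nn] (hn : 3 ≤ nn)
    (P : ZMod nn → ℂ) (hconv : ConvexCyclic P) :
    (∃ ε : Bool, Preferred (fun i => P (i + 1) - P i) ε ∧
      winding (fun i => P (i + 1) - P i) ε = 1) ∧
    (Even nn →
      ∀ ε : Bool, Preferred (fun i => P (i + 1) - P i) ε →
        LocallyConvex
          (fun i : ZMod nn => if Even i.val then P (i + 1) - P i else -(P (i + 1) - P i)) ∧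
        Preferred
          (fun i : ZMod nn => if Even i.val then P (i + 1) - P i else -(P (i + 1) - P i)) (!ε) ∧
        winding
          (fun i : ZMod nn => if Even i.val then P (i + 1) - P i else -(P (i + 1) - P i)) (!ε) =
          ((nn : ℝ) - 2) / 2) := by
  obtain ⟨ε₀, hpref, hwind⟩ := exists_preferred_winding_edges_eq_one hn hconv
  refine ⟨⟨ε₀, hpref, hwind⟩, fun heven ε hε => ?_⟩
  obtain rfl := hpref.eq hε
  exact locallyConvex_preferred_winding_alternate heven hpref hwind

end GKMPaper
end

section
/- In the Section 7 setting, let Γ' be a signed GKM structure on the underlying graph of Γ which induces the same unsigned GKM graph as Γ, and suppose that for some index i the labels of the basic edges f_i and h_i in Γ' do not agree. Then: (i) for every i = 1,…,n the labels of f_i and h_i in Γ' do not agree; (ii) the tuple (k_1,…,k_n) associated to the signed fibration Γ → B satisfies k_i = ±1 for all i; and (iii) whenever k_i and k_{i+1} have the same sign, the labels of f_i and f_{i+1} in Γ' either both agree or both disagree with their labels in Γ. -/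
open Classical

namespace GKMPaper

/-! Write `α' = σ • α` with signs `σ = ±1`. Transport along the fiber edge `g m` sends the two
basic edges at its source, `f m` and the one preceding it, straight or crossed onto the two
basic edges at its target. The labels `u`, `w` of `e (m - 1)`, `e m` form a `ℤ`-basis and the
fiber label has coefficients `±k m`, `±k (m - 1)` in it, so a straight transport forces
`σ (f m) = σ (h m)` (and likewise for the preceding edges), whereas a crossed one forces
`k m = ±1`, preserves `σ (f m) * σ (h m)` and, when this product is `-1`, gives
`σ (f m) * σ (f (m - 1)) = k m * k (m - 1)` for `m ≠ 0`. So the product is the same at every `m`,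
which gives (i); every transport is then crossed, which gives (ii) and (iii). -/

lemma OrGraph.dst_rev (G : OrGraph) (e : G.E) : G.dst (G.rev e) = G.src e := by
  rw [← G.src_rev, G.rev_rev]

lemma OrGraph.eq_or_eq_or_eq_of_regular_three {G : OrGraph} (hG : G.Regular 3) {a b c x : G.E}
    (hb : G.src b = G.src a) (hc : G.src c = G.src a) (hx : G.src x = G.src a)
    (hab : a ≠ b) (hac : a ≠ c) (hbc : b ≠ c) : x = a ∨ x = b ∨ x = c := by
  have hcard : ({⟨a, rfl⟩, ⟨b, hb⟩, ⟨c, hc⟩} : Finset {e : G.E // G.src e = G.src a}).card = 3 :=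
    Finset.card_eq_three.mpr ⟨_, _, _, by simpa, by simpa, by simpa, rfl⟩
  have hx' := Finset.eq_univ_of_card _ (hcard.trans (hG _).symm) ▸
    Finset.mem_univ (⟨x, hx⟩ : {e : G.E // G.src e = G.src a})
  simpa using hx'

lemma Connection.t_inj {G : OrGraph} (C : Connection G) {e x y : G.E}
    (hx : G.src x = G.src e) (hy : G.src y = G.src e) (h : C.t e x = C.t e y) : x = y := by
  rw [← C.t_inv e x hx, h, C.t_inv e y hy]

lemma Connection.transport_cases {G : OrGraph} (hG : G.Regular 3) (C : Connection G)
    {e x y x' y' : G.E} (hx : G.src x = G.src e) (hy : G.src y = G.src e)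
    (hx' : G.src x' = G.dst e) (hy' : G.src y' = G.dst e)
    (hxe : x ≠ e) (hye : y ≠ e) (hxy : x ≠ y)
    (hx'e : x' ≠ G.rev e) (hy'e : y' ≠ G.rev e) (hx'y' : x' ≠ y') :
    (C.t e x = x' ∧ C.t e y = y') ∨ (C.t e x = y' ∧ C.t e y = x') := by
  have hstar : ∀ z, G.src z = G.src e → z ≠ e → C.t e z = x' ∨ C.t e z = y' := by
    intro z hz hze
    rcases G.eq_or_eq_or_eq_of_regular_three hG (hx'.trans (G.src_rev e).symm)
      (hy'.trans (G.src_rev e).symm) ((C.src_t e z hz).trans (G.src_rev e).symm)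
      hx'e.symm hy'e.symm hx'y' with h | h | h
    · exact absurd (C.t_inj hz rfl (h.trans (C.t_self e).symm)) hze
    · exact Or.inl h
    · exact Or.inr h
  have hne : C.t e x ≠ C.t e y := fun h => hxy (C.t_inj hx hy h)
  rcases hstar x hx hxe with h₁ | h₁ <;> rcases hstar y hy hye with h₂ | h₂
  · exact absurd (h₁.trans h₂.symm) hne
  · exact Or.inl ⟨h₁, h₂⟩
  · exact Or.inr ⟨h₁, h₂⟩
  · exact absurd (h₁.trans h₂.symm) hne

lemma GraphFib.vertical_rev_iff {G B : OrGraph} (π : GraphFib G B) (e : G.E) :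
    π.Vertical (G.rev e) ↔ π.Vertical e := by
  simp only [GraphFib.Vertical, G.src_rev, G.dst_rev, eq_comm]

lemma GraphFib.ne_of_vertical {G B : OrGraph} {π : GraphFib G B} {x y : G.E}
    (hx : π.Vertical x) (hy : ¬ π.Vertical y) : x ≠ y :=
  fun h => hy (h ▸ hx)

lemma ZMod.apply_eq_apply_of_forall_eq_sub_one {n : ℕ} {β : Type*} {p : ZMod n → β}
    (h : ∀ m, p m = p (m - 1)) (i j : ZMod n) : p i = p j := by
  have hshift : ∀ k : ℤ, p (j + k) = p j := by
    intro k
    induction k using Int.induction_on with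
    | zero => simp
    | succ k ih => rw [h, ← ih]; congr 1; push_cast; ring
    | pred k ih => rw [← ih, h (j + ((-(k : ℤ) : ℤ) : ZMod n))]; congr 1; push_cast; ring
  simpa [ZMod.intCast_zmod_cast] using hshift (ZMod.cast (i - j) : ℤ)

lemma coeffs_eq_of_det_ne_zero {u w : Zm 2} (hdet : u 0 * w 1 - u 1 * w 0 ≠ 0)
    {x y x' y' : ℤ} (h : x • u + y • w = x' • u + y' • w) : x = x' ∧ y = y' := by
  have h₀ := congrFun h 0
  have h₁ := congrFun h 1
  simp only [Pi.add_apply, Pi.smul_apply, smul_eq_mul] at h₀ h₁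
  have hx : (x - x') * (u 0 * w 1 - u 1 * w 0) = 0 := by linear_combination w 1 * h₀ - w 0 * h₁
  have hy : (y - y') * (u 0 * w 1 - u 1 * w 0) = 0 := by linear_combination u 0 * h₁ - u 1 * h₀
  exact ⟨sub_eq_zero.mp ((mul_eq_zero.mp hx).resolve_right hdet),
    sub_eq_zero.mp ((mul_eq_zero.mp hy).resolve_right hdet)⟩

lemma eq_of_straight_transport {u w : Zm 2} (hdet : u 0 * w 1 - u 1 * w 0 ≠ 0)
    {s s' c A B : ℤ} (hA : A ≠ 0) (h : s • w = s' • w + c • (A • u - B • w)) : s = s' := by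
  obtain ⟨hcA, hs⟩ := coeffs_eq_of_det_ne_zero hdet (x := 0) (y := s) (x' := c * A)
    (y' := s' - c * B) (by linear_combination (norm := module) h)
  have hc : c = 0 := (mul_eq_zero.mp hcA.symm).resolve_right hA
  simpa [hc] using hs

lemma twisted_transport {u w : Zm 2} (hdet : u 0 * w 1 - u 1 * w 0 ≠ 0)
    {x y z t c₁ c₂ A B : ℤ} (hx : IsUnit x) (ht : IsUnit t)
    (h₁ : -(t • u) = x • w + c₁ • (A • u - B • w))
    (h₂ : z • w = -(y • u) + c₂ • (A • u - B • w)) :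
    IsUnit A ∧ x * z = y * t ∧ (x * z = -1 → x * y = A * B) := by
  obtain ⟨ht', hx'⟩ := coeffs_eq_of_det_ne_zero hdet (x := -t) (y := 0) (x' := c₁ * A)
    (y' := x - c₁ * B) (by linear_combination (norm := module) h₁)
  obtain ⟨hy', hz'⟩ := coeffs_eq_of_det_ne_zero hdet (x := 0) (y := z) (x' := c₂ * A - y)
    (y' := -(c₂ * B)) (by linear_combination (norm := module) h₂)
  obtain rfl : x = c₁ * B := by linarith
  obtain rfl : t = -(c₁ * A) := by linarith
  obtain rfl : y = c₂ * A := by linarith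
  obtain rfl : z = -(c₂ * B) := hz'
  have hA := isUnit_of_mul_isUnit_right (neg_neg (c₁ * A) ▸ ht.neg)
  have hA2 := Int.isUnit_mul_self hA
  have hB2 := Int.isUnit_mul_self (isUnit_of_mul_isUnit_right hx)
  refine ⟨hA, by linear_combination (-(c₁ * c₂)) * hB2 + c₁ * c₂ * hA2, fun h => ?_⟩
  linear_combination (-(A * B * c₁ * c₂)) * hB2 - A * B * h

def relSign {m : ℕ} (a b : Zm m) : ℤ := if a = b then 1 else -1

section relSign

variable {m : ℕ} {a b c : Zm m}

lemma relSign_eq_one_or_eq_neg_one (a b : Zm m) : relSign a b = 1 ∨ relSign a b = -1 := by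
  unfold relSign; split_ifs <;> simp

lemma isUnit_relSign (a b : Zm m) : IsUnit (relSign a b) :=
  Int.isUnit_iff.mpr (relSign_eq_one_or_eq_neg_one a b)

lemma relSign_mul_self (a b : Zm m) : relSign a b * relSign a b = 1 := by
  rcases relSign_eq_one_or_eq_neg_one a b with h | h <;> simp [h]

lemma relSign_smul_of_pm_eq (h : pm a = pm b) : relSign a b • b = a := by
  unfold relSign
  split_ifs with hab
  · simp [hab]
  · rcases Quotient.exact h with h' | h'
    · exact absurd h' hab
    · simp [h']

lemma ne_iff_relSign_mul_relSign_eq_neg_one (ha : pm a = pm c) (hb : pm b = pm c) :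
    a ≠ b ↔ relSign a c * relSign b c = -1 := by
  unfold relSign
  by_cases hac : a = c <;> by_cases hbc : b = c
  · simp [hac, hbc]
  · simp [hac, hbc, Ne.symm hbc]
  · simp [hac, hbc]
  · have hab : a = b := by
      rw [(Quotient.exact ha).resolve_left hac, (Quotient.exact hb).resolve_left hbc]
    simp [hbc, hab]

end relSign

namespace Section7

variable (S : Section7)

-- The basic edges ending where `f m` and `h m` start; the twist swaps them at `m = 0`.
def fPrev (m : ZMod S.n) : S.G.E := if m = 0 then S.h (-1) else S.f (m - 1)

def hPrev (m : ZMod S.n) : S.G.E := if m = 0 then S.f (-1) else S.h (m - 1)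

lemma fPrev_hPrev_eq (m : ZMod S.n) :
    (S.fPrev m = S.f (m - 1) ∧ S.hPrev m = S.h (m - 1)) ∨
      (S.fPrev m = S.h (m - 1) ∧ S.hPrev m = S.f (m - 1)) := by
  unfold fPrev hPrev
  split_ifs with hm
  · exact Or.inr (by simp [hm])
  · exact Or.inl ⟨rfl, rfl⟩

lemma fPrev_of_ne_zero {m : ZMod S.n} (hm : m ≠ 0) : S.fPrev m = S.f (m - 1) := if_neg hm

lemma fPrev_horiz (m : ZMod S.n) : ¬ S.π.Vertical (S.fPrev m) := by
  rcases S.fPrev_hPrev_eq m with ⟨h, -⟩ | ⟨h, -⟩ <;> rw [h]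
  exacts [S.f_horiz _, S.h_horiz _]

lemma hPrev_horiz (m : ZMod S.n) : ¬ S.π.Vertical (S.hPrev m) := by
  rcases S.fPrev_hPrev_eq m with ⟨-, h⟩ | ⟨-, h⟩ <;> rw [h]
  exacts [S.h_horiz _, S.f_horiz _]

lemma onE_fPrev (m : ZMod S.n) : S.π.onE (S.fPrev m) = S.e (m - 1) := by
  rcases S.fPrev_hPrev_eq m with ⟨h, -⟩ | ⟨h, -⟩ <;> rw [h]
  exacts [S.f_over _, S.h_over _]

lemma onE_hPrev (m : ZMod S.n) : S.π.onE (S.hPrev m) = S.e (m - 1) := by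
  rcases S.fPrev_hPrev_eq m with ⟨-, h⟩ | ⟨-, h⟩ <;> rw [h]
  exacts [S.h_over _, S.f_over _]

lemma dst_fPrev (m : ZMod S.n) : S.G.dst (S.fPrev m) = S.G.src (S.f m) := by
  unfold fPrev
  split_ifs with hm
  · rw [hm]; exact S.twist_h
  · simpa using S.chain_f (m - 1) (by simpa using hm)

lemma dst_hPrev (m : ZMod S.n) : S.G.dst (S.hPrev m) = S.G.src (S.h m) := by
  unfold hPrev
  split_ifs with hm
  · rw [hm]; exact S.twist_f
  · simpa using S.chain_h (m - 1) (by simpa using hm)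

lemma aG_of_horiz {x : S.G.E} (hx : ¬ S.π.Vertical x) : S.aG x = S.aB (S.π.onE x) := by
  obtain ⟨-, -, -, -, -, hlab, -⟩ := S.hfib
  exact hlab x hx

lemma e_ne_rev_e_sub_one (m : ZMod S.n) : S.e m ≠ S.B.rev (S.e (m - 1)) := by
  intro h
  have hv : S.v (m + 1) = S.v (m - 1) := by
    rw [← S.dst_e, h, S.B.dst_rev, S.src_e]
  have h2 : ((2 : ℕ) : ZMod S.n) = 0 := by
    linear_combination S.v_bij.injective hv
  have := Nat.le_of_dvd two_pos ((ZMod.natCast_eq_zero_iff 2 S.n).mp h2)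
  have := S.hn
  omega

lemma ne_rev_of_onE {x y : S.G.E} (hy : ¬ S.π.Vertical y) {m : ZMod S.n}
    (hx : S.π.onE x = S.e m) (hy' : S.π.onE y = S.e (m - 1)) : x ≠ S.G.rev y := by
  rintro rfl
  rw [S.π.rev_onE y hy, hy'] at hx
  exact S.e_ne_rev_e_sub_one m hx.symm

lemma src_rev_fPrev (m : ZMod S.n) : S.G.src (S.G.rev (S.fPrev m)) = S.G.src (S.g m) := by
  rw [S.G.src_rev, S.dst_fPrev, S.g_src]

lemma src_rev_hPrev (m : ZMod S.n) : S.G.src (S.G.rev (S.hPrev m)) = S.G.dst (S.g m) := by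
  rw [S.G.src_rev, S.dst_hPrev, S.g_dst]

lemma transport_along_g (C : Connection S.G) (m : ZMod S.n) :
    (C.t (S.g m) (S.f m) = S.h m ∧
        C.t (S.g m) (S.G.rev (S.fPrev m)) = S.G.rev (S.hPrev m)) ∨
      (C.t (S.g m) (S.f m) = S.G.rev (S.hPrev m) ∧
        C.t (S.g m) (S.G.rev (S.fPrev m)) = S.h m) := by
  have hrev_fPrev := (S.π.vertical_rev_iff (S.fPrev m)).not.mpr (S.fPrev_horiz m)
  have hrev_hPrev := (S.π.vertical_rev_iff (S.hPrev m)).not.mpr (S.hPrev_horiz m)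
  have hrev_g := (S.π.vertical_rev_iff (S.g m)).mpr (S.g_vert m)
  exact C.transport_cases S.hG.1 (S.g_src m).symm
    (S.src_rev_fPrev m) (S.g_dst m).symm (S.src_rev_hPrev m)
    (GraphFib.ne_of_vertical (S.g_vert m) (S.f_horiz m)).symm
    (GraphFib.ne_of_vertical (S.g_vert m) hrev_fPrev).symm
    (S.ne_rev_of_onE (S.fPrev_horiz m) (S.f_over m) (S.onE_fPrev m))
    (GraphFib.ne_of_vertical hrev_g (S.h_horiz m)).symm
    (GraphFib.ne_of_vertical hrev_g hrev_hPrev).symm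
    (S.ne_rev_of_onE (S.hPrev_horiz m) (S.h_over m) (S.onE_hPrev m))

def sign (α' : S.G.E → Zm 2) (x : S.G.E) : ℤ := relSign (α' x) (S.aG x)

lemma sign_eq_one_or_eq_neg_one (α' : S.G.E → Zm 2) (x : S.G.E) :
    S.sign α' x = 1 ∨ S.sign α' x = -1 :=
  relSign_eq_one_or_eq_neg_one _ _

lemma sign_mul_self (α' : S.G.E → Zm 2) (x : S.G.E) : S.sign α' x * S.sign α' x = 1 :=
  relSign_mul_self _ _

variable {S} {α' : S.G.E → Zm 2}

lemma sign_smul_aG (hsame : ∀ x, pm (α' x) = pm (S.aG x)) (x : S.G.E) :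
    S.sign α' x • S.aG x = α' x :=
  relSign_smul_of_pm_eq (hsame x)

lemma ne_iff_sign_mul_sign_eq_neg_one (hsame : ∀ x, pm (α' x) = pm (S.aG x)) (i : ZMod S.n) :
    α' (S.f i) ≠ α' (S.h i) ↔ S.sign α' (S.f i) * S.sign α' (S.h i) = -1 := by
  have haG : S.aG (S.h i) = S.aG (S.f i) := by
    rw [S.aG_of_horiz (S.h_horiz i), S.aG_of_horiz (S.f_horiz i), S.f_over, S.h_over]
  unfold sign
  rw [haG]
  exact ne_iff_relSign_mul_relSign_eq_neg_one (hsame _) (haG ▸ hsame _)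

lemma sign_transport {C : Connection S.G} (hC : SignedCompat S.G α' C)
    (hsame : ∀ x, pm (α' x) = pm (S.aG x)) (m : ZMod S.n) :
    (S.sign α' (S.f m) = S.sign α' (S.h m) ∧ S.sign α' (S.fPrev m) = S.sign α' (S.hPrev m)) ∨
    (IsUnit (S.k m) ∧
      S.sign α' (S.f m) * S.sign α' (S.h m) = S.sign α' (S.fPrev m) * S.sign α' (S.hPrev m) ∧
      (S.sign α' (S.f m) * S.sign α' (S.h m) = -1 →
        S.sign α' (S.f m) * S.sign α' (S.fPrev m) =
          S.k m * if m = 0 then -S.k (m - 1) else S.k (m - 1))) := by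
  obtain ⟨-, hcong, hrev⟩ := hC
  set u := S.aB (S.e (m - 1))
  set w := S.aB (S.e m)
  set b := if m = 0 then -S.k (m - 1) else S.k (m - 1)
  set σ := S.sign α'
  have hdet : u 0 * w 1 - u 1 * w 0 ≠ 0 := by
    rcases S.delzant m with h | h <;> rw [h] <;> norm_num
  have hb : b ≠ 0 := by unfold b; split_ifs <;> simp [S.k_ne]
  have hσg : σ (S.g m) ≠ 0 := (isUnit_relSign _ _).ne_zero
  have hf : α' (S.f m) = σ (S.f m) • w := by
    rw [← S.sign_smul_aG hsame, S.aG_of_horiz (S.f_horiz m), S.f_over]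
  have hh : α' (S.h m) = σ (S.h m) • w := by
    rw [← S.sign_smul_aG hsame, S.aG_of_horiz (S.h_horiz m), S.h_over]
  have hfP : α' (S.G.rev (S.fPrev m)) = -(σ (S.fPrev m) • u) := by
    rw [hrev, ← S.sign_smul_aG hsame, S.aG_of_horiz (S.fPrev_horiz m), S.onE_fPrev]
  have hhP : α' (S.G.rev (S.hPrev m)) = -(σ (S.hPrev m) • u) := by
    rw [hrev, ← S.sign_smul_aG hsame, S.aG_of_horiz (S.hPrev_horiz m), S.onE_hPrev]
  have hg : α' (S.g m) = σ (S.g m) • (S.k m • u - b • w) := by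
    rw [← S.sign_smul_aG hsame, S.fiberweight]
  obtain ⟨c₁, hc₁⟩ := hcong (S.g m) (S.f m) (S.g_src m).symm
  obtain ⟨c₂, hc₂⟩ := hcong (S.g m) (S.G.rev (S.fPrev m)) (S.src_rev_fPrev m)
  rcases S.transport_along_g C m with ⟨h₁, h₂⟩ | ⟨h₁, h₂⟩
  · rw [h₁, hh, hf, hg] at hc₁
    rw [h₂, hhP, hfP, hg] at hc₂
    refine Or.inl ⟨(eq_of_straight_transport hdet (s := σ (S.h m)) (s' := σ (S.f m)) (c := c₁)
      (B := σ (S.g m) * b) (mul_ne_zero hσg (S.k_ne m))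
      (by linear_combination (norm := module) hc₁)).symm, ?_⟩
    have hdet' : w 0 * u 1 - w 1 * u 0 ≠ 0 := by contrapose! hdet; linear_combination -hdet
    exact (eq_of_straight_transport hdet' (s := σ (S.hPrev m)) (s' := σ (S.fPrev m)) (c := c₂)
      (B := σ (S.g m) * S.k m) (mul_ne_zero hσg hb)
      (by linear_combination (norm := module) -hc₂)).symm
  · rw [h₁, hhP, hf, hg] at hc₁
    rw [h₂, hh, hfP, hg] at hc₂
    obtain ⟨hA, hprod, himp⟩ := twisted_transport hdet (x := σ (S.f m)) (y := σ (S.fPrev m))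
      (z := σ (S.h m)) (t := σ (S.hPrev m)) (c₁ := c₁) (c₂ := c₂) (A := σ (S.g m) * S.k m)
      (B := σ (S.g m) * b) (isUnit_relSign _ _) (isUnit_relSign _ _)
      (by linear_combination (norm := module) hc₁) (by linear_combination (norm := module) hc₂)
    refine Or.inr ⟨isUnit_of_mul_isUnit_right hA, hprod, fun h => ?_⟩
    rw [himp h]
    linear_combination S.k m * b * S.sign_mul_self α' (S.g m)

lemma sign_mul_sign_eq_sub_one {C : Connection S.G} (hC : SignedCompat S.G α' C)
    (hsame : ∀ x, pm (α' x) = pm (S.aG x)) (m : ZMod S.n) :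
    S.sign α' (S.f m) * S.sign α' (S.h m) =
      S.sign α' (S.f (m - 1)) * S.sign α' (S.h (m - 1)) := by
  have hprev : S.sign α' (S.fPrev m) * S.sign α' (S.hPrev m) =
      S.sign α' (S.f (m - 1)) * S.sign α' (S.h (m - 1)) := by
    rcases S.fPrev_hPrev_eq m with ⟨h₁, h₂⟩ | ⟨h₁, h₂⟩
    · rw [h₁, h₂]
    · rw [h₁, h₂, mul_comm]
  rw [← hprev]
  rcases sign_transport hC hsame m with ⟨h₁, h₂⟩ | ⟨-, h, -⟩
  · rw [h₁, h₂, S.sign_mul_self, S.sign_mul_self]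
  · exact h

lemma isUnit_k_of_sign_mul_sign_eq_neg_one {C : Connection S.G} (hC : SignedCompat S.G α' C)
    (hsame : ∀ x, pm (α' x) = pm (S.aG x)) {m : ZMod S.n}
    (hm : S.sign α' (S.f m) * S.sign α' (S.h m) = -1) :
    IsUnit (S.k m) ∧ S.sign α' (S.f m) * S.sign α' (S.fPrev m) =
      S.k m * if m = 0 then -S.k (m - 1) else S.k (m - 1) := by
  rcases sign_transport hC hsame m with ⟨h, -⟩ | ⟨hk, -, himp⟩
  · rw [h, S.sign_mul_self] at hm
    norm_num at hm
  · exact ⟨hk, himp hm⟩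

lemma sign_eq_sign_add_one {C : Connection S.G} (hC : SignedCompat S.G α' C)
    (hsame : ∀ x, pm (α' x) = pm (S.aG x)) {i : ZMod S.n} (hi : i + 1 ≠ 0)
    (hdis : S.sign α' (S.f (i + 1)) * S.sign α' (S.h (i + 1)) = -1)
    (hpos : 0 < S.k i * S.k (i + 1)) :
    S.sign α' (S.f i) = S.sign α' (S.f (i + 1)) := by
  have hrel := (isUnit_k_of_sign_mul_sign_eq_neg_one hC hsame hdis).2
  rw [if_neg hi, add_sub_cancel_right, S.fPrev_of_ne_zero hi, add_sub_cancel_right] at hrel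
  have hσpos : 0 < S.sign α' (S.f (i + 1)) * S.sign α' (S.f i) := by
    rw [hrel, mul_comm]
    exact hpos
  rcases S.sign_eq_one_or_eq_neg_one α' (S.f i) with h | h <;>
    rcases S.sign_eq_one_or_eq_neg_one α' (S.f (i + 1)) with h' | h' <;>
    simp only [h, h'] at hσpos ⊢ <;> norm_num at hσpos

end Section7

/-- in the Section 7 setting, if a signed GKM structure `α'` inducing
the same unsigned GKM graph has disagreeing labels on `f i` and `h i` for some `i`,
then (i) the labels of `f i` and `h i` disagree for every `i`; (ii) all `k_i = ±1`;
(iii) whenever `k_i` and `k_{i+1}` have the same sign, the labels of `f i` and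
`f (i+1)` in `α'` both agree or both disagree with those in `Γ`. -/
theorem statement15 (S : Section7) (α' : S.G.E → Zm 2)
    (hcompat : ∃ C : Connection S.G, SignedCompat S.G α' C)
    (hsame : ∀ ed, pm (α' ed) = pm (S.aG ed))
    (hdis : ∃ i, α' (S.f i) ≠ α' (S.h i)) :
    (∀ i, α' (S.f i) ≠ α' (S.h i)) ∧
    (∀ i, S.k i = 1 ∨ S.k i = -1) ∧
    (∀ i : ZMod S.n, i + 1 ≠ 0 → 0 < S.k i * S.k (i + 1) →
      ((α' (S.f i) = S.aG (S.f i) ∧ α' (S.f (i + 1)) = S.aG (S.f (i + 1))) ∨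
       (α' (S.f i) = - S.aG (S.f i) ∧ α' (S.f (i + 1)) = - S.aG (S.f (i + 1))))) := by
  obtain ⟨C, hC⟩ := hcompat
  obtain ⟨i₀, hi₀⟩ := hdis
  have hdis_iff := S.ne_iff_sign_mul_sign_eq_neg_one hsame
  have hall (i : ZMod S.n) : S.sign α' (S.f i) * S.sign α' (S.h i) = -1 :=
    (ZMod.apply_eq_apply_of_forall_eq_sub_one (S.sign_mul_sign_eq_sub_one hC hsame) i i₀).trans
      ((hdis_iff i₀).mp hi₀)
  refine ⟨fun i => (hdis_iff i).mpr (hall i),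
    fun i => Int.isUnit_iff.mp (S.isUnit_k_of_sign_mul_sign_eq_neg_one hC hsame (hall i)).1,
    fun i hi hpos => ?_⟩
  rw [← S.sign_smul_aG hsame (S.f i), ← S.sign_smul_aG hsame (S.f (i + 1)),
    ← S.sign_eq_sign_add_one hC hsame hi (hall (i + 1)) hpos]
  rcases S.sign_eq_one_or_eq_neg_one α' (S.f i) with h | h <;> simp [h]

end GKMPaper
end
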